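/- arXiv:2209.05025 — 2 statements merged into one kernel-verified Lean document; each statement's English description precedes it below -/
import Mathlib

section
/- Let Γ = (Γ_t)_{t>0} be a family of continuous kernels on ℝ^d×ℝ^d such that for some constants C, γ, c > 0 and all t, s > 0, x, x', y ∈ ℝ^d and m ∈ ℤ^d: (i) Γ_{t+s}(x,y) = ∫_{ℝ^d} Γ_t(x,w) Γ_s(w,y) dw; (ii) |Γ_t(x,y)| ≤ C e^{γt} G_t^{(c,0)}(x−y); (iii) |Γ_t(x,y) − Γ_t(x',y)| ≤ C e^{γt} ‖x−x'‖_𝔰 (G_t^{(c,−1)}(x−y) + G_t^{(c,−1)}(x'−y)); (iv) |∫_{ℝ^d} Γ_t(x,y) dy − 1| ≤ C e^{γt} t^{1/N}; (v) Γ_t(x+m, y+m) = Γ_t(x,y). For a bounded continuous f : ℝ^d → ℝ and β < 0 set ‖f‖_{𝒞^β(Γ)} := sup_{0 < t ≤ 1} t^{−β/N} sup_{x ∈ ℝ^d} |∫_{ℝ^d} Γ_t(x,y) f(y) dy|. Then for any β' < β < 0, every sequence (f_n) of bounded continuous ℤ^d-periodic functions with sup_n ‖f_n‖_{𝒞^β(Γ)}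 < ∞ admits a subsequence that is Cauchy with respect to ‖·‖_{𝒞^{β'}(Γ)}; in other words the embedding 𝒞_𝔰^β(Γ) ⊂ 𝒞_𝔰^{β'}(Γ) is compact on periodic functions. -/
open MeasureTheory Real

/-- Anisotropic norm `‖x‖_𝔰 = Σ_j |x_j|^{1/𝔰_j}`. -/
noncomputable def sNorm (d : ℕ) (s : Fin d → ℕ) (x : Fin d → ℝ) : ℝ :=
  ∑ j, |x j| ^ ((1 : ℝ) / (s j : ℝ))

/-- The Gaussian-type kernel
`G_t^{(c,ζ)}(x) = t^{(ζ−|𝔰|)/N} exp(−c Σ_j (|x_j|^{N/𝔰_j}/t)^{𝔰_j/(N−𝔰_j)})`. -/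
noncomputable def GK (d N : ℕ) (s : Fin d → ℕ) (c ζ t : ℝ) (x : Fin d → ℝ) : ℝ :=
  t ^ ((ζ - ∑ j, (s j : ℝ)) / (N : ℝ)) *
    Real.exp (-c * ∑ j, (|x j| ^ ((N : ℝ) / (s j : ℝ)) / t) ^ ((s j : ℝ) / ((N : ℝ) - (s j : ℝ))))

/-!
A bound in `𝒞^β(Γ)` says `|Γ_t f_n| ≤ M t^{β/N}` for `t ≤ 1`. Since `Γ_{2u} f_n = Γ_u (Γ_u f_n)`,
the Lipschitz estimate for `Γ_u` makes the functions `Γ_{2u} f_n` equi-Lipschitz for `‖·‖_𝔰`,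
uniformly in `n`; by periodicity only their values on the unit cube matter, so Arzelà–Ascoli and
a diagonal argument give one subsequence along which `Γ_τ f_n` is uniformly Cauchy for every
dyadic time `τ`. For `t ≤ τ` the bound `M t^{β/N} = M t^{(β-β')/N} t^{β'/N}` is already small
compared with `t^{β'/N}`; for `τ < t ≤ 1` one writes `Γ_t = Γ_{t-τ} Γ_τ` and uses that
`Γ_{t-τ}(x, ·)` has `L¹` norm bounded uniformly in `t`.
-/

open Filter Topology

lemma integrable_exp_neg_mul_abs_rpow {b p : ℝ} (hb : 0 < b) (hp : 0 < p) :
    Integrable fun x : ℝ => exp (-b * |x| ^ p) := by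
  have hIoi : IntegrableOn (fun x : ℝ => exp (-b * |x| ^ p)) (Set.Ioi 0) :=
    (integrableOn_rpow_mul_exp_neg_mul_rpow (s := 0) (by norm_num) hp hb).congr_fun
      (fun x hx => by simp [abs_of_pos (Set.mem_Ioi.mp hx)]) measurableSet_Ioi
  rw [← integrableOn_univ, ← Set.Iio_union_Ici (a := (0 : ℝ)), integrableOn_union,
    integrableOn_Ici_iff_integrableOn_Ioi]
  refine ⟨?_, hIoi⟩
  rw [← (Measure.measurePreserving_neg (volume : Measure ℝ)).integrableOn_comp_preimage
      (Homeomorph.neg ℝ).measurableEmbedding]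
  simpa [Function.comp_def] using hIoi

section Gaussian

variable {d N : ℕ} {s : Fin d → ℕ} {c ζ t : ℝ}

noncomputable def gaussMass (d N : ℕ) (s : Fin d → ℕ) (c : ℝ) : ℝ :=
  ∏ j, ∫ y : ℝ, exp (-c * |y| ^ ((N : ℝ) / (N - s j)))

lemma gaussMass_nonneg : 0 ≤ gaussMass d N s c :=
  Finset.prod_nonneg fun _ _ => integral_nonneg fun _ => (exp_pos _).le

lemma GK_eq_mul_prod (hs : ∀ j, 0 < s j) (hN : ∀ j, s j < N) (ht : 0 < t) (x : Fin d → ℝ) :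
    GK d N s c ζ t x = t ^ ((ζ - ∑ j, (s j : ℝ)) / N) *
      ∏ j, exp (-c * |(t ^ ((s j : ℝ) / N))⁻¹ * x j| ^ ((N : ℝ) / (N - s j))) := by
  rw [GK, ← exp_sum, Finset.mul_sum]
  congr 3 with j
  have hsj : (0 : ℝ) < s j := by exact_mod_cast hs j
  have hNs : (s j : ℝ) < N := by exact_mod_cast hN j
  rw [abs_mul, abs_inv, abs_of_pos (rpow_pos_of_pos ht _), ← rpow_neg ht.le,
    mul_rpow (rpow_nonneg ht.le _) (abs_nonneg _), ← rpow_mul ht.le,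
    div_rpow (rpow_nonneg (abs_nonneg _) _) ht.le, ← rpow_mul (abs_nonneg _), div_eq_mul_inv,
    ← rpow_neg ht.le, mul_comm (t ^ _)]
  have hN0 : (N : ℝ) ≠ 0 := by linarith
  have hNs0 : (N : ℝ) - s j ≠ 0 := by linarith
  congr 3 <;> field_simp

lemma integrable_GK (hs : ∀ j, 0 < s j) (hN : ∀ j, s j < N) (hc : 0 < c) (ht : 0 < t) :
    Integrable (GK d N s c ζ t) := by
  simp_rw [funext (GK_eq_mul_prod hs hN ht)]
  refine .const_mul (.fintype_prod (f := fun j (y : ℝ) =>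
    exp (-c * |(t ^ ((s j : ℝ) / N))⁻¹ * y| ^ ((N : ℝ) / (N - s j)))) fun j => ?_) _
  have hsj : (0 : ℝ) < s j := by exact_mod_cast hs j
  have hNs : (s j : ℝ) < N := by exact_mod_cast hN j
  exact (integrable_exp_neg_mul_abs_rpow hc (div_pos (by linarith) (by linarith))).comp_mul_left'
    (inv_ne_zero (rpow_pos_of_pos ht _).ne')

lemma integral_GK (hs : ∀ j, 0 < s j) (hN : ∀ j, s j < N) (ht : 0 < t) :
    ∫ x, GK d N s c ζ t x = t ^ (ζ / N) * gaussMass d N s c := by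
  simp_rw [GK_eq_mul_prod hs hN ht, integral_const_mul]
  rw [integral_fintype_prod_volume_eq_prod (f := fun j (y : ℝ) =>
    exp (-c * |(t ^ ((s j : ℝ) / N))⁻¹ * y| ^ ((N : ℝ) / (N - s j))))]
  have hscale : ∀ j, ∫ y : ℝ, exp (-c * |(t ^ ((s j : ℝ) / N))⁻¹ * y| ^ ((N : ℝ) / (N - s j)))
      = t ^ ((s j : ℝ) / N) * ∫ y : ℝ, exp (-c * |y| ^ ((N : ℝ) / (N - s j))) := fun j => by
    rw [Measure.integral_comp_inv_mul_left (fun y => exp (-c * |y| ^ ((N : ℝ) / (N - s j)))),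
      smul_eq_mul, abs_of_pos (rpow_pos_of_pos ht _)]
  simp_rw [hscale]
  rw [Finset.prod_mul_distrib, ← rpow_sum_of_pos ht, ← Finset.sum_div, ← mul_assoc, ← rpow_add ht,
    gaussMass]
  ring_nf

lemma integral_GK_sub (hs : ∀ j, 0 < s j) (hN : ∀ j, s j < N) (ht : 0 < t) (x : Fin d → ℝ) :
    ∫ y, GK d N s c ζ t (x - y) = t ^ (ζ / N) * gaussMass d N s c := by
  rw [integral_sub_left_eq_self (GK d N s c ζ t) volume x, integral_GK hs hN ht]

end Gaussian

section AnisotropicNorm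

variable {d : ℕ} {s : Fin d → ℕ}

lemma sNorm_zero (hs : ∀ j, 0 < s j) : sNorm d s 0 = 0 :=
  Finset.sum_eq_zero fun j _ => by
    simp [zero_rpow (inv_pos.mpr (Nat.cast_pos.mpr (hs j))).ne']

lemma continuous_sNorm : Continuous (sNorm d s) :=
  continuous_finsetSum _ fun j _ =>
    (continuous_apply j).abs.rpow_const fun _ => Or.inr (by positivity)

lemma equicontinuous_of_abs_sub_le_mul_sNorm {ι : Type*} {F : ι → (Fin d → ℝ) → ℝ} {L : ℝ}
    (hs : ∀ j, 0 < s j) (hF : ∀ i x x', |F i x - F i x'| ≤ L * sNorm d s (x - x')) :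
    Equicontinuous F := fun x₀ =>
  Metric.equicontinuousAt_of_continuity_modulus (fun x => L * sNorm d s (x₀ - x))
    ((continuous_const.mul (continuous_sNorm.comp (continuous_const.sub continuous_id))).tendsto'
      x₀ 0 (by simp [sNorm_zero hs]))
    F (.of_forall fun x i => hF i x₀ x)

end AnisotropicNorm

section ArzelaAscoli

lemma Equicontinuous.uniformCauchySeqOn_of_dense {X α : Type*} [TopologicalSpace X]
    [PseudoMetricSpace α] {F : ℕ → X → α} (hF : Equicontinuous F) {D : Set X} (hD : Dense D)
    (hcau : ∀ x ∈ D, CauchySeq fun n => F n x) {K : Set X} (hK : IsCompact K) :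
    UniformCauchySeqOn F atTop K := by
  rw [Metric.uniformCauchySeqOn_iff]
  intro ε hε
  have hU : ∀ x, {y | ∀ n, dist (F n x) (F n y) < ε / 5} ∈ 𝓝 x := fun x =>
    Metric.equicontinuousAt_iff_right.mp (hF x) _ (by positivity)
  obtain ⟨T, -, hKT⟩ := hK.elim_nhds_subcover _ fun x _ => hU x
  choose e he using fun x => hD.inter_nhds_nonempty (hU x)
  choose M hM using fun x => Metric.cauchySeq_iff.mp (hcau _ (he x).1) (ε / 5) (by positivity)
  refine ⟨T.sup M, fun m hm n hn y hy => ?_⟩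
  obtain ⟨x, hxT, hyx⟩ := Set.mem_iUnion₂.mp (hKT hy)
  have hm' := hM x m ((T.le_sup hxT).trans hm) n ((T.le_sup hxT).trans hn)
  have h1 := hyx m
  have h3 := (he x).2 n
  rw [dist_comm] at h1 h3
  linarith [hyx n, (he x).2 m, dist_triangle (F m y) (F n (e x)) (F n y),
    dist_triangle4 (F m y) (F m x) (F m (e x)) (F n (e x)),
    dist_triangle (F n (e x)) (F n x) (F n y)]

lemma exists_strictMono_forall_cauchySeq {ι : Type*} [Countable ι] (a : ℕ → ι → ℝ) (R : ι → ℝ)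
    (ha : ∀ n i, |a n i| ≤ R i) :
    ∃ φ : ℕ → ℕ, StrictMono φ ∧ ∀ i, CauchySeq fun n => a (φ n) i := by
  obtain ⟨b, -, φ, hφ, hlim⟩ := (isCompact_univ_pi fun i => isCompact_Icc).tendsto_subseq
    (x := a) fun n => Set.mem_univ_pi.mpr fun i => abs_le.mp (ha n i)
  exact ⟨φ, hφ, fun i => (((continuous_apply i).tendsto b).comp hlim).cauchySeq⟩

theorem exists_strictMono_forall_uniformCauchySeqOn {X ι : Type*} [TopologicalSpace X]
    [TopologicalSpace.SeparableSpace X] [Countable ι] (u : ι → ℕ → X → ℝ) (R : ι → ℝ)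
    (hR : ∀ i n x, |u i n x| ≤ R i) (hu : ∀ i, Equicontinuous (u i)) {K : Set X}
    (hK : IsCompact K) :
    ∃ φ : ℕ → ℕ, StrictMono φ ∧ ∀ i, UniformCauchySeqOn (fun n => u i (φ n)) atTop K := by
  obtain ⟨D, hDc, hD⟩ := TopologicalSpace.exists_countable_dense X
  have := hDc.to_subtype
  obtain ⟨φ, hφ, hcau⟩ := exists_strictMono_forall_cauchySeq
    (fun n (p : ι × D) => u p.1 n p.2) (fun p => R p.1) fun n p => hR _ _ _
  exact ⟨φ, hφ, fun i =>
    ((hu i).comp φ).uniformCauchySeqOn_of_dense hD (fun x hx => hcau (i, ⟨x, hx⟩)) hK⟩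

lemma uniformCauchySeqOn_univ_of_periodic {d : ℕ} {ι β : Type*} [UniformSpace β]
    {F : ι → (Fin d → ℝ) → β} {p : Filter ι}
    (hF : ∀ i x (m : Fin d → ℤ), F i (x + fun j => (m j : ℝ)) = F i x)
    (h : UniformCauchySeqOn F p (Set.Icc 0 1)) : UniformCauchySeqOn F p Set.univ := by
  intro U hU
  filter_upwards [h U hU] with q hq x _
  have hx : x = (fun j => Int.fract (x j)) + fun j => ((⌊x j⌋ : ℤ) : ℝ) := by
    ext j
    simp only [Pi.add_apply, Int.fract_add_floor]
  rw [hx, hF, hF]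
  exact hq _ ⟨fun j => Int.fract_nonneg _, fun j => (Int.fract_lt_one _).le⟩

end ArzelaAscoli

section KernelOperator

variable {E : Type*} [MeasurableSpace E] {μ : Measure E}

noncomputable def kernelOp (μ : Measure E) (K : E → E → ℝ) (g : E → ℝ) (x : E) : ℝ :=
  ∫ y, K x y * g y ∂μ

lemma integral_abs_mul_le_of_abs_le {k g : E → ℝ} {B : ℝ} (hk : Integrable k μ)
    (hB : ∀ y, |g y| ≤ B) : ∫ y, |k y * g y| ∂μ ≤ B * ∫ y, |k y| ∂μ := by
  rw [← integral_const_mul]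
  refine integral_mono_of_nonneg (.of_forall fun _ => abs_nonneg _) (hk.abs.const_mul B)
    (.of_forall fun y => ?_)
  dsimp only
  rw [abs_mul, mul_comm]
  exact mul_le_mul_of_nonneg_right (hB y) (abs_nonneg _)

lemma abs_integral_mul_le_of_abs_le {k g : E → ℝ} {B : ℝ} (hk : Integrable k μ)
    (hB : ∀ y, |g y| ≤ B) : |∫ y, k y * g y ∂μ| ≤ B * ∫ y, |k y| ∂μ :=
  abs_integral_le_integral_abs.trans (integral_abs_mul_le_of_abs_le hk hB)

lemma kernelOp_sub {K : E → E → ℝ} {g g' : E → ℝ} {x : E}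
    (hg : Integrable (fun y => K x y * g y) μ) (hg' : Integrable (fun y => K x y * g' y) μ) :
    kernelOp μ K g x - kernelOp μ K g' x = ∫ y, K x y * (g y - g' y) ∂μ := by
  simp_rw [kernelOp, ← integral_sub hg hg', mul_sub]

lemma aestronglyMeasurable_kernelOp [SFinite μ] {K : E → E → ℝ} {g : E → ℝ}
    (hK : AEStronglyMeasurable (Function.uncurry K) (μ.prod μ)) (hg : AEStronglyMeasurable g μ) :
    AEStronglyMeasurable (kernelOp μ K g) μ :=
  (hK.mul hg.comp_snd).integral_prod_right'

lemma integral_integral_mul_mul_eq_kernelOp_kernelOp [SFinite μ] {K₁ K₂ : E → E → ℝ}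
    {g : E → ℝ} {A B : ℝ} {x : E} (hK₁ : Integrable (K₁ x) μ)
    (hK₂ : AEStronglyMeasurable (Function.uncurry K₂) (μ.prod μ))
    (hK₂int : ∀ w, Integrable (K₂ w) μ) (hK₂A : ∀ w, ∫ y, |K₂ w y| ∂μ ≤ A)
    (hg : AEStronglyMeasurable g μ) (hgB : ∀ y, |g y| ≤ B) :
    ∫ y, (∫ w, K₁ x w * K₂ w y ∂μ) * g y ∂μ = kernelOp μ K₁ (kernelOp μ K₂ g) x := by
  set F : E × E → ℝ := fun p => K₁ x p.1 * (K₂ p.1 p.2 * g p.2)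
  have hFm : AEStronglyMeasurable F (μ.prod μ) := hK₁.1.comp_fst.mul (hK₂.mul hg.comp_snd)
  have hF : Integrable F (μ.prod μ) := by
    refine (integrable_prod_iff hFm).mpr ⟨.of_forall fun w =>
      ((hK₂int w).mul_bdd hg (.of_forall hgB)).const_mul (K₁ x w), ?_⟩
    refine (hK₁.abs.mul_const (B * A)).mono' hFm.norm.integral_prod_right' (.of_forall fun w => ?_)
    simp only [F, norm_mul, Real.norm_eq_abs]
    rw [abs_of_nonneg (integral_nonneg fun _ => by positivity), integral_const_mul]
    simp_rw [← abs_mul]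
    exact mul_le_mul_of_nonneg_left ((integral_abs_mul_le_of_abs_le (hK₂int w) hgB).trans
      (mul_le_mul_of_nonneg_left (hK₂A w) ((abs_nonneg _).trans (hgB w)))) (abs_nonneg _)
  calc ∫ y, (∫ w, K₁ x w * K₂ w y ∂μ) * g y ∂μ = ∫ y, ∫ w, F (w, y) ∂μ ∂μ := by
        simp_rw [F, ← integral_mul_const, mul_assoc]
    _ = ∫ w, ∫ y, F (w, y) ∂μ ∂μ := (integral_integral_swap hF).symm
    _ = kernelOp μ K₁ (kernelOp μ K₂ g) x := by simp_rw [F, integral_const_mul]; rfl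

lemma kernelOp_apply_add_eq_of_invariant [AddGroup E] [MeasurableAdd E] [μ.IsAddRightInvariant]
    {K : E → E → ℝ} {g : E → ℝ} {v : E} (hK : ∀ x y, K (x + v) (y + v) = K x y)
    (hg : ∀ y, g (y + v) = g y) (x : E) : kernelOp μ K g (x + v) = kernelOp μ K g x := by
  rw [kernelOp, ← integral_add_right_eq_self _ v]
  simp_rw [hK, hg]
  rfl

end KernelOperator

structure IsGaussianBounded (d N : ℕ) (s : Fin d → ℕ)
    (Γk : ℝ → (Fin d → ℝ) → (Fin d → ℝ) → ℝ) (C γ c : ℝ) : Prop where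
  scaling_pos : ∀ j, 0 < s j
  scaling_lt : ∀ j, s j < N
  rate_pos : 0 < c
  continuous : ∀ t > (0:ℝ), Continuous fun p : (Fin d → ℝ) × (Fin d → ℝ) => Γk t p.1 p.2
  abs_le : ∀ t > (0:ℝ), ∀ x y : Fin d → ℝ,
    |Γk t x y| ≤ C * Real.exp (γ * t) * GK d N s c 0 t (x - y)

def HasGaussianLipschitzBound (d N : ℕ) (s : Fin d → ℕ)
    (Γk : ℝ → (Fin d → ℝ) → (Fin d → ℝ) → ℝ) (C γ c : ℝ) : Prop :=
  ∀ t > (0:ℝ), ∀ x x' y : Fin d → ℝ,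
    |Γk t x y - Γk t x' y| ≤ C * Real.exp (γ * t) * sNorm d s (x - x') *
      (GK d N s c (-1) t (x - y) + GK d N s c (-1) t (x' - y))

namespace IsGaussianBounded

variable {d N : ℕ} {s : Fin d → ℕ} {Γk : ℝ → (Fin d → ℝ) → (Fin d → ℝ) → ℝ} {C γ c t u : ℝ}

lemma integrable (hΓ : IsGaussianBounded d N s Γk C γ c) (ht : 0 < t) (x : Fin d → ℝ) :
    Integrable (Γk t x) :=
  (((integrable_GK hΓ.scaling_pos hΓ.scaling_lt hΓ.rate_pos ht).comp_sub_left x).const_mul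
    _).mono' ((hΓ.continuous t ht).comp (.prodMk_right x)).aestronglyMeasurable
    (.of_forall (hΓ.abs_le t ht x))

lemma integrable_mul (hΓ : IsGaussianBounded d N s Γk C γ c) {g : (Fin d → ℝ) → ℝ}
    (hg : AEStronglyMeasurable g) (hgb : ∃ B, ∀ y, |g y| ≤ B) (ht : 0 < t) (x : Fin d → ℝ) :
    Integrable fun y => Γk t x y * g y :=
  hgb.elim fun _ hB => (hΓ.integrable ht x).mul_bdd hg (.of_forall hB)

lemma integral_abs_le (hΓ : IsGaussianBounded d N s Γk C γ c) (ht : 0 < t) (x : Fin d → ℝ) :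
    ∫ y, |Γk t x y| ≤ C * exp (γ * t) * gaussMass d N s c := by
  calc ∫ y, |Γk t x y| ≤ ∫ y, C * exp (γ * t) * GK d N s c 0 t (x - y) :=
        integral_mono (hΓ.integrable ht x).abs
          (((integrable_GK hΓ.scaling_pos hΓ.scaling_lt hΓ.rate_pos ht).comp_sub_left
            x).const_mul _) (hΓ.abs_le t ht x)
    _ = C * exp (γ * t) * gaussMass d N s c := by
        rw [integral_const_mul, integral_GK_sub hΓ.scaling_pos hΓ.scaling_lt ht, zero_div,
          rpow_zero, one_mul]

lemma abs_kernelOp_le (hΓ : IsGaussianBounded d N s Γk C γ c) {g : (Fin d → ℝ) → ℝ} {B : ℝ}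
    (hB : ∀ y, |g y| ≤ B) (ht : 0 < t) (x : Fin d → ℝ) :
    |kernelOp volume (Γk t) g x| ≤ B * (C * exp (γ * t) * gaussMass d N s c) :=
  (abs_integral_mul_le_of_abs_le (hΓ.integrable ht x) hB).trans
    (mul_le_mul_of_nonneg_left (hΓ.integral_abs_le ht x) ((abs_nonneg _).trans (hB 0)))

lemma integral_abs_sub_le (hΓ : IsGaussianBounded d N s Γk C γ c)
    (hLip : HasGaussianLipschitzBound d N s Γk C γ c) (ht : 0 < t) (x x' : Fin d → ℝ) :
    ∫ y, |Γk t x y - Γk t x' y| ≤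
      C * exp (γ * t) * sNorm d s (x - x') * (2 * t ^ (-1 / N : ℝ) * gaussMass d N s c) := by
  have hG := integrable_GK (ζ := -1) hΓ.scaling_pos hΓ.scaling_lt hΓ.rate_pos ht
  calc ∫ y, |Γk t x y - Γk t x' y|
      ≤ ∫ y, C * exp (γ * t) * sNorm d s (x - x') *
          (GK d N s c (-1) t (x - y) + GK d N s c (-1) t (x' - y)) :=
        integral_mono ((hΓ.integrable ht x).sub (hΓ.integrable ht x')).abs
          (((hG.comp_sub_left x).add (hG.comp_sub_left x')).const_mul _) (hLip t ht x x')
    _ = _ := by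
        rw [integral_const_mul, integral_add (hG.comp_sub_left x) (hG.comp_sub_left x'),
          integral_GK_sub hΓ.scaling_pos hΓ.scaling_lt ht,
          integral_GK_sub hΓ.scaling_pos hΓ.scaling_lt ht]
        ring

lemma abs_kernelOp_sub_kernelOp_le (hΓ : IsGaussianBounded d N s Γk C γ c)
    (hLip : HasGaussianLipschitzBound d N s Γk C γ c) {g : (Fin d → ℝ) → ℝ} {B : ℝ}
    (hg : AEStronglyMeasurable g) (hB : ∀ y, |g y| ≤ B) (ht : 0 < t) (x x' : Fin d → ℝ) :
    |kernelOp volume (Γk t) g x - kernelOp volume (Γk t) g x'| ≤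
      B * (C * exp (γ * t) * (2 * t ^ (-1 / N : ℝ) * gaussMass d N s c)) *
        sNorm d s (x - x') := by
  have hsplit : kernelOp volume (Γk t) g x - kernelOp volume (Γk t) g x' =
      ∫ y, (Γk t x y - Γk t x' y) * g y := by
    simp_rw [kernelOp, sub_mul]
    exact (integral_sub (hΓ.integrable_mul hg ⟨B, hB⟩ ht x)
      (hΓ.integrable_mul hg ⟨B, hB⟩ ht x')).symm
  rw [hsplit]
  refine (abs_integral_mul_le_of_abs_le ((hΓ.integrable ht x).sub (hΓ.integrable ht x'))
    hB).trans ?_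
  calc B * ∫ y, |Γk t x y - Γk t x' y|
      ≤ B * (C * exp (γ * t) * sNorm d s (x - x') *
          (2 * t ^ (-1 / N : ℝ) * gaussMass d N s c)) :=
        mul_le_mul_of_nonneg_left (hΓ.integral_abs_sub_le hLip ht x x')
          ((abs_nonneg _).trans (hB 0))
    _ = _ := by ring

lemma kernelOp_add (hΓ : IsGaussianBounded d N s Γk C γ c)
    (hsemi : ∀ t > (0:ℝ), ∀ u > (0:ℝ), ∀ x y : Fin d → ℝ,
      Γk (t + u) x y = ∫ w : Fin d → ℝ, Γk t x w * Γk u w y)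
    {g : (Fin d → ℝ) → ℝ} (hg : AEStronglyMeasurable g) (hgb : ∃ B, ∀ y, |g y| ≤ B)
    (ht : 0 < t) (hu : 0 < u) (x : Fin d → ℝ) :
    kernelOp volume (Γk (t + u)) g x =
      kernelOp volume (Γk t) (kernelOp volume (Γk u) g) x := by
  obtain ⟨B, hB⟩ := hgb
  simp_rw [kernelOp, hsemi t ht u hu x]
  exact integral_integral_mul_mul_eq_kernelOp_kernelOp (hΓ.integrable ht x)
    (hΓ.continuous u hu).aestronglyMeasurable (hΓ.integrable hu) (hΓ.integral_abs_le hu) hg hB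

lemma equicontinuous_kernelOp (hΓ : IsGaussianBounded d N s Γk C γ c)
    (hsemi : ∀ t > (0:ℝ), ∀ u > (0:ℝ), ∀ x y : Fin d → ℝ,
      Γk (t + u) x y = ∫ w : Fin d → ℝ, Γk t x w * Γk u w y)
    (hLip : HasGaussianLipschitzBound d N s Γk C γ c) {g : ℕ → (Fin d → ℝ) → ℝ} {R : ℝ}
    (hg : ∀ n, AEStronglyMeasurable (g n)) (hgb : ∀ n, ∃ B, ∀ y, |g n y| ≤ B) (ht : 0 < t)
    (hR : ∀ n w, |kernelOp volume (Γk (t / 2)) (g n) w| ≤ R) :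
    Equicontinuous fun n => kernelOp volume (Γk t) (g n) := by
  refine equicontinuous_of_abs_sub_le_mul_sNorm hΓ.scaling_pos
    (L := R * (C * exp (γ * (t / 2)) * (2 * (t / 2) ^ (-1 / N : ℝ) * gaussMass d N s c)))
    fun n x x' => ?_
  have hsplit := hΓ.kernelOp_add hsemi (hg n) (hgb n) (half_pos ht) (half_pos ht)
  rw [add_halves] at hsplit
  rw [hsplit, hsplit]
  exact hΓ.abs_kernelOp_sub_kernelOp_le hLip
    (aestronglyMeasurable_kernelOp (hΓ.continuous _ (half_pos ht)).aestronglyMeasurable (hg n))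
    (hR n) (half_pos ht) x x'

lemma abs_kernelOp_sub_le_of_forall_abs_sub_le (hΓ : IsGaussianBounded d N s Γk C γ c)
    (hsemi : ∀ t > (0:ℝ), ∀ u > (0:ℝ), ∀ x y : Fin d → ℝ,
      Γk (t + u) x y = ∫ w : Fin d → ℝ, Γk t x w * Γk u w y)
    (hC : 0 ≤ C) (hγ : 0 ≤ γ) {g g' : (Fin d → ℝ) → ℝ} {δ : ℝ} (hg : AEStronglyMeasurable g)
    (hgb : ∃ B, ∀ y, |g y| ≤ B) (hg' : AEStronglyMeasurable g') (hgb' : ∃ B, ∀ y, |g' y| ≤ B)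
    (hu : 0 < u) (hut : u < t) (ht : t ≤ 1)
    (hδ : ∀ w, |kernelOp volume (Γk u) g w - kernelOp volume (Γk u) g' w| ≤ δ)
    (x : Fin d → ℝ) :
    |kernelOp volume (Γk t) g x - kernelOp volume (Γk t) g' x| ≤
      C * exp γ * gaussMass d N s c * δ := by
  have htu : 0 < t - u := sub_pos.mpr hut
  have hsplit {h : (Fin d → ℝ) → ℝ} (hh : AEStronglyMeasurable h) (hhb : ∃ B, ∀ y, |h y| ≤ B) :
      kernelOp volume (Γk t) h x =
        kernelOp volume (Γk (t - u)) (kernelOp volume (Γk u) h) x := by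
    rw [← hΓ.kernelOp_add hsemi hh hhb htu hu x, sub_add_cancel]
  have hint {h : (Fin d → ℝ) → ℝ} (hh : AEStronglyMeasurable h) (hhb : ∃ B, ∀ y, |h y| ≤ B) :
      Integrable fun w => Γk (t - u) x w * kernelOp volume (Γk u) h w :=
    hΓ.integrable_mul (aestronglyMeasurable_kernelOp (hΓ.continuous u hu).aestronglyMeasurable hh)
      (hhb.elim fun _ hB => ⟨_, hΓ.abs_kernelOp_le hB hu⟩) htu x
  rw [hsplit hg hgb, hsplit hg' hgb', kernelOp_sub (hint hg hgb) (hint hg' hgb')]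
  have hδ0 : 0 ≤ δ := (abs_nonneg _).trans (hδ 0)
  calc _ ≤ δ * ∫ w, |Γk (t - u) x w| := abs_integral_mul_le_of_abs_le (hΓ.integrable htu x) hδ
    _ ≤ δ * (C * exp (γ * (t - u)) * gaussMass d N s c) :=
        mul_le_mul_of_nonneg_left (hΓ.integral_abs_le htu x) hδ0
    _ ≤ C * exp γ * gaussMass d N s c * δ := by
        rw [mul_comm δ]
        gcongr
        · exact gaussMass_nonneg
        · nlinarith

end IsGaussianBounded

lemma forall_exists_abs_sub_le_mul_rpow {X : Type*} (v : ℕ → ℝ → X → ℝ) (τ : ℕ → ℝ)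
    {M A a a' : ℝ} (ha : a' < a) (ha' : a' ≤ 0) (hτ : ∀ k, 0 < τ k)
    (hτ0 : Tendsto τ atTop (𝓝 0)) (hv : ∀ n t, 0 < t → t ≤ 1 → ∀ x, |v n t x| ≤ M * t ^ a)
    (hsmooth : ∀ m n u t δ, 0 < u → u < t → t ≤ 1 → (∀ w, |v m u w - v n u w| ≤ δ) →
      ∀ x, |v m t x - v n t x| ≤ A * δ)
    (hcau : ∀ k, UniformCauchySeqOn (fun n => v n (τ k)) atTop Set.univ) :
    ∀ ε > 0, ∃ K, ∀ m ≥ K, ∀ n ≥ K, ∀ t, 0 < t → t ≤ 1 → ∀ x,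
      |v m t x - v n t x| ≤ ε * t ^ a' := by
  intro ε hε
  have hgap : 0 < a - a' := sub_pos.mpr ha
  have hsmall : Tendsto (fun k => 2 * M * τ k ^ (a - a')) atTop (𝓝 0) := by
    simpa [zero_rpow hgap.ne'] using ((hτ0.rpow_const (.inr hgap.le)).const_mul (2 * M))
  obtain ⟨k, hk⟩ := (hsmall.eventually_lt_const hε).exists
  obtain ⟨K, hK⟩ := Metric.uniformCauchySeqOn_iff.mp (hcau k) (ε / (|A| + 1)) (by positivity)
  refine ⟨K, fun m hm n hn t ht ht1 x => ?_⟩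
  rcases le_or_gt t (τ k) with htk | htk
  · have hm := hv m t ht ht1 x
    have hn := hv n t ht ht1 x
    have hM : 0 ≤ M := nonneg_of_mul_nonneg_left ((abs_nonneg _).trans hm) (rpow_pos_of_pos ht a)
    calc |v m t x - v n t x| ≤ 2 * M * t ^ (a - a') * t ^ a' := by
          rw [mul_assoc, ← rpow_add ht, sub_add_cancel]
          linarith [abs_sub (v m t x) (v n t x)]
      _ ≤ ε * t ^ a' := by
          gcongr
          exact (mul_le_mul_of_nonneg_left (rpow_le_rpow ht.le htk hgap.le) (by positivity)).trans
            hk.le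
  · calc |v m t x - v n t x| ≤ A * (ε / (|A| + 1)) :=
          hsmooth m n _ t _ (hτ k) htk ht1 (fun w => by
            simpa [Real.dist_eq] using (hK m hm n hn w trivial).le) x
      _ ≤ ε := by
          rw [mul_div_assoc', div_le_iff₀ (by positivity)]
          nlinarith [le_abs_self A]
      _ ≤ ε * t ^ a' :=
          le_mul_of_one_le_right hε.le (one_le_rpow_of_pos_of_le_one_of_nonpos ht ht1 ha')

theorem stmt9_general (d N : ℕ) (hd : 0 < d) (s : Fin d → ℕ)
    (hs : ∀ j, 0 < s j) (hN : ∀ j, s j < N)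
    (Γk : ℝ → (Fin d → ℝ) → (Fin d → ℝ) → ℝ)
    (hcont : ∀ t > (0:ℝ), Continuous fun p : (Fin d → ℝ) × (Fin d → ℝ) => Γk t p.1 p.2)
    (C γ c : ℝ) (hC : 0 < C) (hγ : 0 < γ) (hc : 0 < c)
    -- (i) semigroup property
    (hsemi : ∀ t > (0:ℝ), ∀ u > (0:ℝ), ∀ x y : Fin d → ℝ,
      Γk (t + u) x y = ∫ w : Fin d → ℝ, Γk t x w * Γk u w y)
    -- (ii) Gaussian bound
    (hbd : ∀ t > (0:ℝ), ∀ x y : Fin d → ℝ,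
      |Γk t x y| ≤ C * Real.exp (γ * t) * GK d N s c 0 t (x - y))
    -- (iii) Lipschitz estimate in the first variable
    (hLip : ∀ t > (0:ℝ), ∀ x x' y : Fin d → ℝ,
      |Γk t x y - Γk t x' y| ≤ C * Real.exp (γ * t) * sNorm d s (x - x') *
        (GK d N s c (-1) t (x - y) + GK d N s c (-1) t (x' - y)))
    -- (v) periodicity
    (hper : ∀ t > (0:ℝ), ∀ x y : Fin d → ℝ, ∀ m : Fin d → ℤ,
      Γk t (x + fun j => (m j : ℝ)) (y + fun j => (m j : ℝ)) = Γk t x y)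
    (β β' : ℝ) (hβ : β < 0) (hβ' : β' < β)
    (f : ℕ → (Fin d → ℝ) → ℝ)
    (hfc : ∀ n, Continuous (f n)) (hfb : ∀ n, ∃ M, ∀ x, |f n x| ≤ M)
    (hfper : ∀ n, ∀ x : Fin d → ℝ, ∀ m : Fin d → ℤ,
      f n (x + fun j => (m j : ℝ)) = f n x)
    (M : ℝ)
    (hM : ∀ n, ∀ t : ℝ, 0 < t → t ≤ 1 → ∀ x : Fin d → ℝ,
      |∫ y : Fin d → ℝ, Γk t x y * f n y| ≤ M * t ^ (β / N)) :
    ∃ φ : ℕ → ℕ, StrictMono φ ∧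
      ∀ ε > (0:ℝ), ∃ K : ℕ, ∀ m ≥ K, ∀ n ≥ K, ∀ t : ℝ, 0 < t → t ≤ 1 →
        ∀ x : Fin d → ℝ,
          |∫ y : Fin d → ℝ, Γk t x y * (f (φ m) y - f (φ n) y)| ≤ ε * t ^ (β' / N) := by
  have hΓ : IsGaussianBounded d N s Γk C γ c := ⟨hs, hN, hc, hcont, hbd⟩
  have hN0 : (0 : ℝ) < N := by exact_mod_cast (hs ⟨0, hd⟩).trans (hN ⟨0, hd⟩)
  have hf : ∀ n, AEStronglyMeasurable (f n) := fun n => (hfc n).aestronglyMeasurable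
  have hτ : ∀ k : ℕ, 0 < (1 / 2 : ℝ) ^ k ∧ (1 / 2 : ℝ) ^ k ≤ 1 :=
    fun k => ⟨by positivity, pow_le_one₀ (by norm_num) (by norm_num)⟩
  obtain ⟨φ, hφ, hcau⟩ := exists_strictMono_forall_uniformCauchySeqOn
    (fun k n => kernelOp volume (Γk ((1 / 2) ^ k)) (f n)) (fun k => M * ((1 / 2) ^ k) ^ (β / N))
    (fun k n => hM n _ (hτ k).1 (hτ k).2)
    (fun k => hΓ.equicontinuous_kernelOp hsemi hLip hf hfb (hτ k).1
      fun n => hM n _ (half_pos (hτ k).1) (by linarith [(hτ k).2]))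
    (isCompact_Icc (a := (0 : Fin d → ℝ)) (b := 1))
  refine ⟨φ, hφ, fun ε hε => ?_⟩
  obtain ⟨K, hK⟩ := forall_exists_abs_sub_le_mul_rpow
    (fun n t => kernelOp volume (Γk t) (f (φ n))) (fun k => (1 / 2 : ℝ) ^ k)
    (div_lt_div_of_pos_right hβ' hN0) (div_nonpos_of_nonpos_of_nonneg (by linarith) hN0.le)
    (fun k => (hτ k).1) (tendsto_pow_atTop_nhds_zero_of_lt_one (by norm_num) (by norm_num))
    (fun n => hM (φ n))
    (fun m n u t δ hu hut ht => hΓ.abs_kernelOp_sub_le_of_forall_abs_sub_le hsemi hC.le hγ.le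
      (hf _) (hfb _) (hf _) (hfb _) hu hut ht)
    (fun k => uniformCauchySeqOn_univ_of_periodic
      (fun n x m => kernelOp_apply_add_eq_of_invariant (fun x y => hper _ (hτ k).1 x y m)
        (fun y => hfper _ y m) x)
      (hcau k)) ε hε
  refine ⟨K, fun m hm n hn t ht ht1 x => ?_⟩
  rw [← kernelOp_sub (hΓ.integrable_mul (hf _) (hfb _) ht x)
    (hΓ.integrable_mul (hf _) (hfb _) ht x)]
  exact hK m hm n hn t ht ht1 x

/-- Compactness of the embedding `𝒞_𝔰^β(Γ) ⊂ 𝒞_𝔰^{β'}(Γ)` on periodic functions, for a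
semigroup `(Γ_t)` of kernels with Gaussian bounds, Lipschitz estimates, almost-unit mass and
`ℤ^d`-periodicity: every sequence of bounded continuous periodic functions bounded in the
`𝒞^β(Γ)`-norm admits a subsequence which is Cauchy in the `𝒞^{β'}(Γ)`-norm. -/
theorem stmt9 (d N : ℕ) (hd : 0 < d) (s : Fin d → ℕ)
    (hs : ∀ j, 0 < s j) (hN : ∀ j, s j < N)
    (Γk : ℝ → (Fin d → ℝ) → (Fin d → ℝ) → ℝ)
    (hcont : ∀ t > (0:ℝ), Continuous fun p : (Fin d → ℝ) × (Fin d → ℝ) => Γk t p.1 p.2)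
    (C γ c : ℝ) (hC : 0 < C) (hγ : 0 < γ) (hc : 0 < c)
    -- (i) semigroup property
    (hsemi : ∀ t > (0:ℝ), ∀ u > (0:ℝ), ∀ x y : Fin d → ℝ,
      Γk (t + u) x y = ∫ w : Fin d → ℝ, Γk t x w * Γk u w y)
    -- (ii) Gaussian bound
    (hbd : ∀ t > (0:ℝ), ∀ x y : Fin d → ℝ,
      |Γk t x y| ≤ C * Real.exp (γ * t) * GK d N s c 0 t (x - y))
    -- (iii) Lipschitz estimate in the first variable
    (hLip : ∀ t > (0:ℝ), ∀ x x' y : Fin d → ℝ,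
      |Γk t x y - Γk t x' y| ≤ C * Real.exp (γ * t) * sNorm d s (x - x') *
        (GK d N s c (-1) t (x - y) + GK d N s c (-1) t (x' - y)))
    -- (iv) almost-unit mass
    (hmass : ∀ t > (0:ℝ), ∀ x : Fin d → ℝ,
      |(∫ y : Fin d → ℝ, Γk t x y) - 1| ≤ C * Real.exp (γ * t) * t ^ ((1 : ℝ) / N))
    -- (v) periodicity
    (hper : ∀ t > (0:ℝ), ∀ x y : Fin d → ℝ, ∀ m : Fin d → ℤ,
      Γk t (x + fun j => (m j : ℝ)) (y + fun j => (m j : ℝ)) = Γk t x y)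
    (β β' : ℝ) (hβ : β < 0) (hβ' : β' < β)
    (f : ℕ → (Fin d → ℝ) → ℝ)
    (hfc : ∀ n, Continuous (f n)) (hfb : ∀ n, ∃ M, ∀ x, |f n x| ≤ M)
    (hfper : ∀ n, ∀ x : Fin d → ℝ, ∀ m : Fin d → ℤ,
      f n (x + fun j => (m j : ℝ)) = f n x)
    (M : ℝ)
    (hM : ∀ n, ∀ t : ℝ, 0 < t → t ≤ 1 → ∀ x : Fin d → ℝ,
      |∫ y : Fin d → ℝ, Γk t x y * f n y| ≤ M * t ^ (β / N)) :
    ∃ φ : ℕ → ℕ, StrictMono φ ∧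
      ∀ ε > (0:ℝ), ∃ K : ℕ, ∀ m ≥ K, ∀ n ≥ K, ∀ t : ℝ, 0 < t → t ≤ 1 →
        ∀ x : Fin d → ℝ,
          |∫ y : Fin d → ℝ, Γk t x y * (f (φ m) y - f (φ n) y)| ≤ ε * t ^ (β' / N) :=
  stmt9_general d N hd s hs hN Γk hcont C γ c hC hγ hc hsemi hbd hLip hper β β' hβ hβ' f hfc hfb
    hfper M hM
end

section
/- For every t > 0 and x ∈ ℝ, the map λ ↦ Z_t^λ(x) is real-analytic on (0,∞) with ∂_λ^n Z_t^λ(x) = t^n ∂_x^{2n} Z_t^λ(x) for every n ∈ ℕ; in particular ∂_λ Z^λ(t,x) = t ∂_x² Z^λ(t,x). Moreover ∂_λ Z^λ(t,x) = ∫_0^t ∫_ℝ Z^λ(t−s, x−y) · ∂_y² Z^λ(s,y) dy ds for all t > 0 and x ∈ ℝ. -/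
open MeasureTheory Real

/-- The heat kernel `Z_t^λ(x) = e^{−ct}(4πλt)^{−1/2} exp(−x²/(4λt))` for `t > 0`,
extended by `0` for `t ≤ 0` (the fundamental solution of `∂_t − λ∂_x² + c`). -/
noncomputable def Zker (c lam t x : ℝ) : ℝ :=
  if 0 < t then
    Real.exp (-c * t) * (Real.sqrt (4 * Real.pi * lam * t))⁻¹ *
      Real.exp (-x ^ 2 / (4 * lam * t))
  else 0

/-!
Write `p_v = gaussianPDFReal 0 v` and `φ = p_1`, so that `Z_t^λ = e^{-ct} p_{2λt}`. By scaling,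
`∂_x^m p_v(x) = v^{-(m+1)/2} φ^{(m)}(x/√v)`, and differentiating `φ' = -yφ` gives
`φ^{(m+2)} = -(m+1) φ^{(m)} - y φ^{(m+1)}`. Together these give the heat equation
`∂_v ∂_x^m p_v = ½ ∂_x^{m+2} p_v`, hence `∂_λ ∂_x^m Z = t ∂_x^{m+2} Z`, and
`∂_λ^n Z = tⁿ ∂_x^{2n} Z` by induction; analyticity in `λ` is read off the closed formula.

For the Duhamel formula, completing the square writes `p_a(x - y) p_b(y)` as `p_{a+b}(x)` times
a Gaussian density in `y`, so `∫ p_a(x - y) ∂_y² p_b(y) dy` is a second moment and equals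
`∂_x² p_{a+b}(x)`. Hence the inner integral is `∂_x² Z_t(x)` for every `s ∈ (0, t)`, and the
outer one is `t ∂_x² Z_t(x) = ∂_λ Z_t(x)`.
-/

open ProbabilityTheory NNReal Filter Topology
open scoped ContDiff

lemma integral_sq_gaussianReal (μ : ℝ) (v : ℝ≥0) :
    ∫ x, x ^ 2 ∂gaussianReal μ v = μ ^ 2 + v := by
  have h := variance_eq_sub (memLp_id_gaussianReal (μ := μ) (v := v) 2)
  simp only [variance_id_gaussianReal, Pi.pow_apply, id_eq] at h
  rw [integral_id_gaussianReal] at h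
  linarith

lemma integral_gaussianPDFReal_mul_quadratic (μ : ℝ) {v : ℝ≥0} (hv : v ≠ 0) (a b : ℝ) :
    ∫ y, gaussianPDFReal μ v y * (a * y ^ 2 + b) = a * (μ ^ 2 + v) + b := by
  have hsq : Integrable (fun y : ℝ => y ^ 2) (gaussianReal μ v) :=
    (memLp_id_gaussianReal 2).integrable_sq
  simp_rw [← smul_eq_mul (gaussianPDFReal μ v _), ← integral_gaussianReal_eq_integral_smul hv]
  rw [integral_add (hsq.const_mul a) (integrable_const b), integral_const_mul,
    integral_sq_gaussianReal]
  simp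

lemma hasDerivAt_gaussianPDFReal_zero_one (y : ℝ) :
    HasDerivAt (gaussianPDFReal 0 1) (-y * gaussianPDFReal 0 1 y) y := by
  have h := ((hasDerivAt_pow 2 y).fun_neg.div_const 2).exp.const_mul (√(2 * π))⁻¹
  simp only [gaussianPDFReal_def, sub_zero, NNReal.coe_one, mul_one]
  exact h.congr_deriv (by simp; ring)

lemma contDiff_gaussianPDFReal (μ : ℝ) (v : ℝ≥0) : ContDiff ℝ ∞ (gaussianPDFReal μ v) := by
  rw [gaussianPDFReal_def]
  fun_prop

lemma hasDerivAt_iteratedDeriv_gaussianPDFReal (μ : ℝ) (v : ℝ≥0) (m : ℕ) (y : ℝ) :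
    HasDerivAt (iteratedDeriv m (gaussianPDFReal μ v))
      (iteratedDeriv (m + 1) (gaussianPDFReal μ v) y) y := by
  rw [iteratedDeriv_succ]
  exact ((contDiff_gaussianPDFReal μ v).differentiable_iteratedDeriv m
    (mod_cast WithTop.coe_lt_top m) y).hasDerivAt

lemma iteratedDeriv_one_gaussianPDFReal_zero_one :
    iteratedDeriv 1 (gaussianPDFReal 0 1) = fun y => -y * gaussianPDFReal 0 1 y := by
  ext y
  rw [iteratedDeriv_one]
  exact (hasDerivAt_gaussianPDFReal_zero_one y).deriv

lemma iteratedDeriv_add_two_gaussianPDFReal_zero_one (m : ℕ) (y : ℝ) :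
    iteratedDeriv (m + 2) (gaussianPDFReal 0 1) y =
      -(m + 1) * iteratedDeriv m (gaussianPDFReal 0 1) y
        - y * iteratedDeriv (m + 1) (gaussianPDFReal 0 1) y := by
  induction m generalizing y with
  | zero =>
    rw [iteratedDeriv_succ, iteratedDeriv_one_gaussianPDFReal_zero_one,
      ((hasDerivAt_id' y).fun_neg.fun_mul (hasDerivAt_gaussianPDFReal_zero_one y)).deriv]
    simp
  | succ m ih =>
    have h := ((hasDerivAt_iteratedDeriv_gaussianPDFReal 0 1 m y).const_mul
      (-(m + 1 : ℝ))).fun_sub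
        ((hasDerivAt_id' y).fun_mul (hasDerivAt_iteratedDeriv_gaussianPDFReal 0 1 (m + 1) y))
    rw [← funext ih] at h
    rw [iteratedDeriv_succ, h.deriv]
    push_cast
    ring

lemma gaussianPDFReal_zero_toNNReal_eq_inv_sqrt_mul (v : ℝ) (x : ℝ) :
    gaussianPDFReal 0 v.toNNReal x = (√v)⁻¹ * gaussianPDFReal 0 1 ((√v)⁻¹ * x) := by
  rcases le_or_gt v 0 with hv | hv
  · simp [Real.toNNReal_eq_zero.2 hv, Real.sqrt_eq_zero'.2 hv]
  · simp only [gaussianPDFReal_def, sub_zero, Real.coe_toNNReal _ hv.le, NNReal.coe_one,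
      mul_one]
    have hs : (√v) ^ 2 = v := Real.sq_sqrt hv.le
    rw [Real.sqrt_mul (by positivity), mul_inv, mul_pow, inv_pow, hs]
    field_simp

lemma iteratedDeriv_gaussianPDFReal_zero_toNNReal (v : ℝ) (m : ℕ) (x : ℝ) :
    iteratedDeriv m (gaussianPDFReal 0 v.toNNReal) x =
      (√v)⁻¹ ^ (m + 1) * iteratedDeriv m (gaussianPDFReal 0 1) ((√v)⁻¹ * x) := by
  rw [funext (gaussianPDFReal_zero_toNNReal_eq_inv_sqrt_mul v), iteratedDeriv_const_mul_field,
    iteratedDeriv_comp_const_mul ((contDiff_gaussianPDFReal 0 1).of_le (mod_cast le_top))]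
  ring

lemma hasDerivAt_pow_mul_iteratedDeriv_gaussianPDFReal_zero_one (m : ℕ) (x r : ℝ) :
    HasDerivAt (fun r => r ^ (m + 1) * iteratedDeriv m (gaussianPDFReal 0 1) (r * x))
      (-(r ^ m * iteratedDeriv (m + 2) (gaussianPDFReal 0 1) (r * x))) r := by
  have h := (hasDerivAt_pow (m + 1) r).fun_mul
    ((hasDerivAt_iteratedDeriv_gaussianPDFReal 0 1 m (r * x)).comp r
      ((hasDerivAt_id' r).mul_const x))
  refine h.congr_deriv ?_
  rw [iteratedDeriv_add_two_gaussianPDFReal_zero_one, Function.comp_apply]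
  push_cast
  ring

lemma hasDerivAt_var_iteratedDeriv_gaussianPDFReal {v : ℝ} (hv : 0 < v) (m : ℕ) (x : ℝ) :
    HasDerivAt (fun w : ℝ => iteratedDeriv m (gaussianPDFReal 0 w.toNNReal) x)
      (iteratedDeriv (m + 2) (gaussianPDFReal 0 v.toNNReal) x / 2) v := by
  have hs : 0 < √v := Real.sqrt_pos.2 hv
  have hr : HasDerivAt (fun w => (√w)⁻¹) (-((√v)⁻¹ ^ 3 / 2)) v := by
    refine ((Real.hasDerivAt_sqrt hv.ne').inv hs.ne').congr_deriv ?_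
    field_simp
  simp only [iteratedDeriv_gaussianPDFReal_zero_toNNReal]
  refine ((hasDerivAt_pow_mul_iteratedDeriv_gaussianPDFReal_zero_one m x _).comp v
    hr).congr_deriv ?_
  ring

lemma iteratedDeriv_two_gaussianPDFReal_zero_toNNReal {v : ℝ} (hv : 0 < v) (y : ℝ) :
    iteratedDeriv 2 (gaussianPDFReal 0 v.toNNReal) y =
      gaussianPDFReal 0 v.toNNReal y * ((v ^ 2)⁻¹ * y ^ 2 + -v⁻¹) := by
  obtain ⟨s, hs, rfl⟩ : ∃ s, 0 < s ∧ s ^ 2 = v :=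
    ⟨√v, Real.sqrt_pos.2 hv, Real.sq_sqrt hv.le⟩
  rw [iteratedDeriv_gaussianPDFReal_zero_toNNReal, gaussianPDFReal_zero_toNNReal_eq_inv_sqrt_mul,
    iteratedDeriv_add_two_gaussianPDFReal_zero_one 0, zero_add,
    iteratedDeriv_one_gaussianPDFReal_zero_one, iteratedDeriv_zero, Real.sqrt_sq hs.le]
  norm_num
  field_simp
  ring

lemma gaussianPDFReal_sub_mul_gaussianPDFReal {a b : ℝ} (ha : 0 < a) (hb : 0 < b) (x y : ℝ) :
    gaussianPDFReal 0 a.toNNReal (x - y) * gaussianPDFReal 0 b.toNNReal y =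
      gaussianPDFReal 0 (a + b).toNNReal x *
        gaussianPDFReal (b * x / (a + b)) (a * b / (a + b)).toNNReal y := by
  have hab : 0 < a + b := by positivity
  simp only [gaussianPDFReal_def, sub_zero, Real.coe_toNNReal _ ha.le, Real.coe_toNNReal _ hb.le,
    Real.coe_toNNReal _ hab.le, Real.coe_toNNReal _ (by positivity : 0 ≤ a * b / (a + b))]
  have hsqrt : √(2 * π * a) * √(2 * π * b) =
      √(2 * π * (a + b)) * √(2 * π * (a * b / (a + b))) := by
    rw [← Real.sqrt_mul (by positivity), ← Real.sqrt_mul (by positivity)]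
    congr 1
    field_simp
  have hexp : -(x - y) ^ 2 / (2 * a) + -y ^ 2 / (2 * b) =
      -x ^ 2 / (2 * (a + b)) + -(y - b * x / (a + b)) ^ 2 / (2 * (a * b / (a + b))) := by
    field_simp
    ring
  calc _ = (√(2 * π * a) * √(2 * π * b))⁻¹ *
        exp (-(x - y) ^ 2 / (2 * a) + -y ^ 2 / (2 * b)) := by
        rw [exp_add, mul_inv]; ring
    _ = _ := by
        rw [hsqrt, hexp, exp_add, mul_inv]; ring

lemma integral_gaussianPDFReal_sub_mul_iteratedDeriv_two {a b : ℝ} (ha : 0 < a) (hb : 0 < b)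
    (x : ℝ) :
    ∫ y, gaussianPDFReal 0 a.toNNReal (x - y) *
        iteratedDeriv 2 (gaussianPDFReal 0 b.toNNReal) y =
      iteratedDeriv 2 (gaussianPDFReal 0 (a + b).toNNReal) x := by
  have hab : 0 < a + b := by positivity
  have hvar : (a * b / (a + b)).toNNReal ≠ 0 := by simp; positivity
  simp_rw [iteratedDeriv_two_gaussianPDFReal_zero_toNNReal hb, ← mul_assoc,
    gaussianPDFReal_sub_mul_gaussianPDFReal ha hb, mul_assoc]
  rw [integral_const_mul, integral_gaussianPDFReal_mul_quadratic _ hvar,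
    iteratedDeriv_two_gaussianPDFReal_zero_toNNReal hab, Real.coe_toNNReal _ (by positivity)]
  congr 1
  field_simp
  ring

lemma analyticAt_sqrt {x : ℝ} (hx : 0 < x) : AnalyticAt ℝ Real.sqrt x := by
  have h : AnalyticAt ℝ (fun y => exp (log y / 2)) x := (analyticAt_log hx).div_const.rexp
  refine h.congr (eventually_of_mem (Ioi_mem_nhds hx) fun y (hy : 0 < y) => ?_)
  rw [Real.sqrt_eq_rpow, Real.rpow_def_of_pos hy, one_div, ← div_eq_mul_inv]

lemma Zker_eq_exp_mul_gaussianPDFReal {t : ℝ} (ht : 0 < t) (c lam x : ℝ) :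
    Zker c lam t x = exp (-c * t) * gaussianPDFReal 0 (2 * lam * t).toNNReal x := by
  rw [Zker, if_pos ht, mul_assoc]
  rcases le_or_gt lam 0 with hlam | hlam
  · have hv : 2 * lam * t ≤ 0 := by nlinarith
    have hv' : 4 * π * lam * t ≤ 0 := by nlinarith [Real.pi_pos]
    simp [Real.toNNReal_eq_zero.2 hv, Real.sqrt_eq_zero'.2 hv']
  · simp only [gaussianPDFReal, sub_zero, Real.coe_toNNReal _ (by positivity : 0 ≤ 2 * lam * t)]
    congr 3 <;> ring_nf

lemma iteratedDeriv_Zker {t : ℝ} (ht : 0 < t) (c lam : ℝ) (m : ℕ) (x : ℝ) :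
    iteratedDeriv m (fun w => Zker c lam t w) x =
      exp (-c * t) * iteratedDeriv m (gaussianPDFReal 0 (2 * lam * t).toNNReal) x := by
  simp_rw [Zker_eq_exp_mul_gaussianPDFReal ht]
  exact iteratedDeriv_const_mul_field _ _

lemma analyticAt_Zker_diffusivity {t lam : ℝ} (ht : 0 < t) (hlam : 0 < lam) (c x : ℝ) :
    AnalyticAt ℝ (fun l => Zker c l t x) lam := by
  simp only [Zker, if_pos ht]
  have hsqrt : AnalyticAt ℝ (fun l => √(4 * π * l * t)) lam :=
    (analyticAt_sqrt (by positivity)).comp (by fun_prop)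
  have hpos : √(4 * π * lam * t) ≠ 0 := (Real.sqrt_pos.2 (by positivity)).ne'
  have hden : 4 * lam * t ≠ 0 := by positivity
  fun_prop (disch := assumption)

lemma hasDerivAt_iteratedDeriv_Zker_diffusivity {t lam : ℝ} (ht : 0 < t) (hlam : 0 < lam)
    (c : ℝ) (m : ℕ) (x : ℝ) :
    HasDerivAt (fun l => iteratedDeriv m (fun w => Zker c l t w) x)
      (t * iteratedDeriv (m + 2) (fun w => Zker c lam t w) x) lam := by
  simp only [iteratedDeriv_Zker ht]
  have hvar : HasDerivAt (fun l : ℝ => 2 * l * t) (2 * t) lam := by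
    simpa using ((hasDerivAt_id' lam).const_mul 2).mul_const t
  refine (((hasDerivAt_var_iteratedDeriv_gaussianPDFReal (by positivity) m x).comp lam
    hvar).const_mul (exp (-c * t))).congr_deriv ?_
  ring

lemma iteratedDeriv_Zker_diffusivity {t lam : ℝ} (ht : 0 < t) (hlam : 0 < lam) (c : ℝ) (n : ℕ)
    (x : ℝ) :
    iteratedDeriv n (fun l => Zker c l t x) lam =
      t ^ n * iteratedDeriv (2 * n) (fun w => Zker c lam t w) x := by
  induction n generalizing lam with
  | zero => simp
  | succ n ih =>
    have hev : iteratedDeriv n (fun l => Zker c l t x) =ᶠ[𝓝 lam]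
        fun l => t ^ n * iteratedDeriv (2 * n) (fun w => Zker c l t w) x :=
      eventually_of_mem (Ioi_mem_nhds hlam) fun l hl => ih hl
    rw [iteratedDeriv_succ, hev.deriv_eq,
      ((hasDerivAt_iteratedDeriv_Zker_diffusivity ht hlam c (2 * n) x).const_mul _).deriv,
      show 2 * (n + 1) = 2 * n + 2 by ring]
    ring

lemma integral_Zker_sub_mul_iteratedDeriv_two_Zker {s t lam : ℝ} (hs : 0 < s) (hst : s < t)
    (hlam : 0 < lam) (c x : ℝ) :
    ∫ y, Zker c lam (t - s) (x - y) * iteratedDeriv 2 (fun w => Zker c lam s w) y =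
      iteratedDeriv 2 (fun w => Zker c lam t w) x := by
  have hts : 0 < t - s := by linarith
  have hexp : exp (-c * (t - s)) * exp (-c * s) = exp (-c * t) := by rw [← exp_add]; ring_nf
  simp_rw [Zker_eq_exp_mul_gaussianPDFReal hts, iteratedDeriv_Zker hs,
    iteratedDeriv_Zker (hs.trans hst), mul_mul_mul_comm (exp _), hexp]
  rw [integral_const_mul,
    integral_gaussianPDFReal_sub_mul_iteratedDeriv_two (by positivity) (by positivity)]
  congr 4
  ring

theorem stmt16_general (c : ℝ) (t x : ℝ) (ht : 0 < t) :
    (∀ lam > (0:ℝ), AnalyticAt ℝ (fun l => Zker c l t x) lam) ∧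
    (∀ lam > (0:ℝ), ∀ n : ℕ,
      iteratedDeriv n (fun l => Zker c l t x) lam =
        t ^ n * iteratedDeriv (2 * n) (fun w => Zker c lam t w) x) ∧
    (∀ lam > (0:ℝ),
      deriv (fun l => Zker c l t x) lam =
        ∫ s in Set.Ioo (0:ℝ) t, ∫ y : ℝ,
          Zker c lam (t - s) (x - y) * iteratedDeriv 2 (fun w => Zker c lam s w) y) := by
  refine ⟨fun lam hlam => analyticAt_Zker_diffusivity ht hlam c x,
    fun lam hlam n => iteratedDeriv_Zker_diffusivity ht hlam c n x, fun lam hlam => ?_⟩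
  have hderiv := hasDerivAt_iteratedDeriv_Zker_diffusivity ht hlam c 0 x
  simp only [iteratedDeriv_zero] at hderiv
  rw [hderiv.deriv, setIntegral_congr_fun measurableSet_Ioo
      fun s hs => integral_Zker_sub_mul_iteratedDeriv_two_Zker hs.1 hs.2 hlam c x,
    setIntegral_const, Real.volume_real_Ioo_of_le ht.le, sub_zero, smul_eq_mul]

/-- Analyticity of the heat kernel in the diffusivity: for `t > 0` and `x ∈ ℝ`, the map
`λ ↦ Z_t^λ(x)` is real-analytic on `(0,∞)` with `∂_λ^n Z_t^λ(x) = tⁿ ∂_x^{2n} Z_t^λ(x)`,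
and `∂_λ Z^λ(t,x) = ∫_0^t ∫_ℝ Z^λ(t−s, x−y) ∂_y² Z^λ(s,y) dy ds`. -/
theorem stmt16 (c : ℝ) (hc : 0 ≤ c) (t x : ℝ) (ht : 0 < t) :
    (∀ lam > (0:ℝ), AnalyticAt ℝ (fun l => Zker c l t x) lam) ∧
    (∀ lam > (0:ℝ), ∀ n : ℕ,
      iteratedDeriv n (fun l => Zker c l t x) lam =
        t ^ n * iteratedDeriv (2 * n) (fun w => Zker c lam t w) x) ∧
    (∀ lam > (0:ℝ),
      deriv (fun l => Zker c l t x) lam =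
        ∫ s in Set.Ioo (0:ℝ) t, ∫ y : ℝ,
          Zker c lam (t - s) (x - y) * iteratedDeriv 2 (fun w => Zker c lam s w) y) :=
  stmt16_general c t x ht
end
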